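/- arXiv:1506.00085 — 6 statements merged into one kernel-verified Lean document; each statement's English description precedes it below -/
import Mathlib

section
/- (Tchakaloff) Let μ be a positive Borel measure on ℝⁿ all of whose moments of degree ≤ t are finite, and set σ_α = ∫ x^α dμ for every multi-index α with |α| ≤ t. Then there exist an integer r ≤ s_t = C(n+t, n), weights w₁,…,w_r > 0, and points ζ₁,…,ζ_r in the support of μ such that σ_α = ∑_{i=1}^r wᵢ ζᵢ^α for every α with |α| ≤ t. -/
/-!
Put `G x = (x ^ α)_{|α| ≤ t}`. The moment vector `∫ G dμ` lies in the convex cone spanned by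
`G (supp μ)`. After projecting onto the span of `G (supp μ)` we may assume that this cone spans
the whole space; if `∫ G dμ` were outside the cone, a nonzero functional `f` would be `≤ 0` on
the cone and `≥ 0` at `∫ G dμ`. Then `f ∘ G ≤ 0` on the support while `∫ f ∘ G ≥ 0`, so the
continuous function `f ∘ G` vanishes on `supp μ`, i.e. `f` vanishes on a spanning set.
Carathéodory's theorem for cones then writes `∫ G dμ` as a positive combination of linearly
independent vectors `G ζᵢ`, of which there are at most `dim = C(n + t, n)`.
-/

open MeasureTheory

/-- The support of a measure `μ` on a topological space: the set of points all of whose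
open neighbourhoods have positive measure. -/
def measureSupport {X : Type*} [TopologicalSpace X] [MeasurableSpace X]
    (μ : Measure X) : Set X :=
  {x | ∀ U : Set X, IsOpen U → x ∈ U → 0 < μ U}

open Set Finset

theorem measureSupport_eq_support {X : Type*} [TopologicalSpace X] [MeasurableSpace X]
    (μ : Measure X) : measureSupport μ = μ.support := by
  ext x
  rw [Measure.mem_support_iff_forall]
  refine ⟨fun hx U hU => ?_, fun hx U hU hxU => hx U (hU.mem_nhds hxU)⟩
  obtain ⟨V, hVU, hV, hxV⟩ := mem_nhds_iff.mp hU
  exact (hx V hV hxV).trans_le (measure_mono hVU)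

theorem MeasureTheory.Measure.eqOn_zero_of_integral_eq_zero {X : Type*} [TopologicalSpace X]
    [MeasurableSpace X] [HereditarilyLindelofSpace X] {μ : Measure X} {g : X → ℝ}
    (hg : Continuous g) (hg0 : ∀ x ∈ μ.support, 0 ≤ g x) (hgi : Integrable g μ)
    (hint : ∫ x, g x ∂μ = 0) : EqOn g 0 μ.support := by
  have hae : g =ᵐ[μ] 0 := by
    refine (integral_eq_zero_iff_of_nonneg_ae ?_ hgi).mp hint
    filter_upwards [μ.support_mem_ae] with x hx using hg0 x hx
  intro x hx
  by_contra hne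
  exact Measure.subset_compl_support_of_isOpen (isOpen_ne_fun hg continuous_const)
    (ae_iff.mp hae) hne hx

namespace PointedCone

section Caratheodory

variable {E : Type*} [AddCommGroup E] [Module ℝ E]

theorem exists_pos_of_not_linearIndepOn {t : Finset E} (ht : ¬LinearIndepOn ℝ id (t : Set E)) :
    ∃ c : E → ℝ, ∑ v ∈ t, c v • v = 0 ∧ ∃ u ∈ t, 0 < c u := by
  obtain ⟨c, hc, u, hu, hcu⟩ := not_linearIndepOn_finset_iff.mp ht
  rcases hcu.lt_or_gt with hneg | hpos
  · exact ⟨-c, by simpa using hc, u, hu, by simpa using hneg⟩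
  · exact ⟨c, hc, u, hu, hpos⟩

/-- Subtract from `w` the largest multiple of a linear dependency `c` that keeps the weights
nonnegative; the weight attaining `min {w v / c v | c v > 0}` becomes zero. -/
theorem exists_nonneg_sum_eq_of_not_linearIndepOn {t : Finset E} {w : E → ℝ}
    (hw : ∀ v ∈ t, 0 ≤ w v) (ht : ¬LinearIndepOn ℝ id (t : Set E)) :
    ∃ u ∈ t, ∃ w' : E → ℝ, (∀ v ∈ t, 0 ≤ w' v) ∧ w' u = 0 ∧
      ∑ v ∈ t, w' v • v = ∑ v ∈ t, w v • v := by
  obtain ⟨c, hc, hpos⟩ := exists_pos_of_not_linearIndepOn ht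
  obtain ⟨u, hu, hmin⟩ := exists_min_image (t.filter (0 < c ·)) (fun v => w v / c v)
    (by simpa [filter_nonempty_iff] using hpos)
  rw [mem_filter] at hu
  refine ⟨u, hu.1, fun v => w v - w u / c u * c v, fun v hv => ?_, ?_, ?_⟩
  · rcases le_or_gt (c v) 0 with hcv | hcv
    · nlinarith [hw v hv, div_nonneg (hw u hu.1) hu.2.le]
    · have := hmin v (mem_filter.mpr ⟨hv, hcv⟩)
      rw [div_le_div_iff₀ hu.2 hcv] at this
      rw [sub_nonneg, div_mul_eq_mul_div, div_le_iff₀ hu.2]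
      linarith
  · simp [div_mul_cancel₀ _ hu.2.ne']
  · simp only [sub_smul, sum_sub_distrib, mul_smul, ← smul_sum, hc, smul_zero, sub_zero]

theorem exists_linearIndepOn_pos_sum_eq (t : Finset E) (w : E → ℝ) (hw : ∀ v ∈ t, 0 ≤ w v) :
    ∃ u ⊆ t, ∃ w' : E → ℝ, LinearIndepOn ℝ id (u : Set E) ∧ (∀ v ∈ u, 0 < w' v) ∧
      ∑ v ∈ u, w' v • v = ∑ v ∈ t, w v • v := by
  classical
  induction t using Finset.strongInduction generalizing w with
  | H t ih =>
    by_cases h : ∃ u ∈ t, ∃ w' : E → ℝ, (∀ v ∈ t, 0 ≤ w' v) ∧ w' u = 0 ∧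
        ∑ v ∈ t, w' v • v = ∑ v ∈ t, w v • v
    · obtain ⟨u, hu, w', hw', hw'u, hsum⟩ := h
      obtain ⟨u', hu', w'', hli, hpos, hsum'⟩ :=
        ih (t.erase u) (erase_ssubset hu) w' fun v hv => hw' v (mem_of_mem_erase hv)
      refine ⟨u', hu'.trans (erase_subset u t), w'', hli, hpos, ?_⟩
      rw [hsum', sum_erase _ (by simp [hw'u]), hsum]
    · refine ⟨t, subset_rfl, w, ?_, fun v hv => (hw v hv).lt_of_ne' fun h0 =>
        h ⟨v, hv, w, hw, h0, rfl⟩, rfl⟩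
      by_contra hli
      exact h (exists_nonneg_sum_eq_of_not_linearIndepOn hw hli)

theorem exists_fin_pos_sum_eq_of_mem_hull [Module.Finite ℝ E] {s : Set E} {x : E}
    (hx : x ∈ hull ℝ s) :
    ∃ r ≤ Module.finrank ℝ E, ∃ (w : Fin r → ℝ) (v : Fin r → E),
      (∀ i, 0 < w i) ∧ (∀ i, v i ∈ s) ∧ ∑ i, w i • v i = x := by
  obtain ⟨c, hcs, hc0, rfl⟩ := mem_hull_set.mp hx
  obtain ⟨u, hu, w, hli, hw, hsum⟩ :=
    exists_linearIndepOn_pos_sum_eq c.support c fun v _ => hc0 v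
  let e := u.equivFin
  refine ⟨#u, LinearIndependent.finset_card_le_finrank hli, fun i => w (e.symm i),
    fun i => e.symm i, fun i => hw _ (e.symm i).2, fun i => hcs (hu (e.symm i).2), ?_⟩
  rw [e.symm.sum_comp (fun v : u => w v • (v : E)), sum_coe_sort u (fun v => w v • v), hsum]
  rfl

end Caratheodory

theorem map_nonpos_of_forall_le {E : Type*} [AddCommGroup E] [Module ℝ E]
    {C : PointedCone ℝ E} {f : E →ₗ[ℝ] ℝ} {a : ℝ} (hf : ∀ c ∈ C, f c ≤ a) {c : E}
    (hc : c ∈ C) : f c ≤ 0 := by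
  by_contra! hpos
  have hr : 0 ≤ (|a| + 1) / f c := by positivity
  have := hf _ (C.smul_mem hr hc)
  rw [map_smul, smul_eq_mul, div_mul_cancel₀ _ hpos.ne'] at this
  linarith [le_abs_self a]

theorem exists_separating_functional_of_notMem {E : Type*} [NormedAddCommGroup E]
    [NormedSpace ℝ E] [FiniteDimensional ℝ E] {C : PointedCone ℝ E}
    (hC : Submodule.span ℝ (C : Set E) = ⊤) {y : E} (hy : y ∉ C) :
    ∃ f : StrongDual ℝ E, f ≠ 0 ∧ (∀ c ∈ C, f c ≤ 0) ∧ 0 ≤ f y := by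
  have hint : (interior (C : Set E)).Nonempty := by
    rw [C.convex.interior_nonempty_iff_affineSpan_eq_top,
      AffineSubspace.affineSpan_eq_top_iff_vectorSpan_eq_top_of_nonempty ℝ E E ⟨0, C.zero_mem⟩,
      vectorSpan_eq_span_vsub_set_right ℝ C.zero_mem]
    simpa using hC
  obtain ⟨f, hf⟩ := geometric_hahn_banach_open_point C.convex.interior isOpen_interior
    fun h => hy (interior_subset h)
  have hfC : ∀ c ∈ C, f c ≤ f y := fun c hc => by
    refine closure_minimal (fun a ha => (hf a ha).le) (isClosed_le f.continuous continuous_const) ?_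
    rw [C.convex.closure_interior_eq_closure_of_nonempty_interior hint]
    exact subset_closure hc
  obtain ⟨a, ha⟩ := hint
  refine ⟨f, fun h0 => ?_, fun c hc => map_nonpos_of_forall_le (f := f.toLinearMap) hfC hc,
    by simpa using hfC 0 C.zero_mem⟩
  simpa [h0] using hf a ha

end PointedCone

section IntegralMemHull

variable {X : Type*} [TopologicalSpace X] [MeasurableSpace X] [HereditarilyLindelofSpace X]
  {E : Type*} [NormedAddCommGroup E] [NormedSpace ℝ E] [FiniteDimensional ℝ E]
  {μ : Measure X} {G : X → E}

theorem integral_mem_hull_image_support_of_span_eq_top (hG : Continuous G)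
    (hGi : Integrable G μ) (hspan : Submodule.span ℝ (G '' μ.support) = ⊤) :
    ∫ x, G x ∂μ ∈ PointedCone.hull ℝ (G '' μ.support) := by
  by_contra hy
  obtain ⟨f, hf0, hfC, hfy⟩ := PointedCone.exists_separating_functional_of_notMem
    (eq_top_mono (Submodule.span_mono PointedCone.subset_hull) hspan) hy
  have hfG : ∀ x ∈ μ.support, 0 ≤ -f (G x) := fun x hx =>
    neg_nonneg.mpr (hfC _ (PointedCone.subset_hull (mem_image_of_mem G hx)))
  have hint : ∫ x, -f (G x) ∂μ = 0 := by
    rw [integral_neg, f.integral_comp_comm hGi, neg_eq_zero]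
    refine le_antisymm ?_ hfy
    rw [← f.integral_comp_comm hGi]
    refine integral_nonpos_of_ae ?_
    filter_upwards [μ.support_mem_ae] with x hx using neg_nonneg.mp (hfG x hx)
  have hker : G '' μ.support ⊆ LinearMap.ker f.toLinearMap := by
    rintro _ ⟨x, hx, rfl⟩
    simpa using Measure.eqOn_zero_of_integral_eq_zero (by fun_prop) hfG
      (f.integrable_comp hGi).neg hint hx
  rw [← Submodule.span_le, hspan, top_le_iff, LinearMap.ker_eq_top] at hker
  exact hf0 (ContinuousLinearMap.coe_injective hker)

theorem integral_mem_hull_image_support (hG : Continuous G) (hGi : Integrable G μ) :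
    ∫ x, G x ∂μ ∈ PointedCone.hull ℝ (G '' μ.support) := by
  set W := Submodule.span ℝ (G '' μ.support)
  obtain ⟨P, hP⟩ := Submodule.ClosedComplemented.of_finiteDimensional W
  have hPG : ∀ x ∈ μ.support, (P (G x) : E) = G x := fun x hx =>
    congrArg Subtype.val (hP ⟨G x, Submodule.subset_span (mem_image_of_mem G hx)⟩)
  have himage : (fun x => P (G x)) '' μ.support = ((↑) : W → E) ⁻¹' (G '' μ.support) := by
    ext z
    constructor
    · rintro ⟨x, hx, rfl⟩
      exact ⟨x, hx, (hPG x hx).symm⟩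
    · rintro ⟨x, hx, hxz⟩
      exact ⟨x, hx, by simp only [hxz, hP]⟩
  have hW := integral_mem_hull_image_support_of_span_eq_top (G := fun x => P (G x))
    (by fun_prop) (P.integrable_comp hGi)
    (by rw [himage]; exact Submodule.span_span_coe_preimage)
  have heq : ∫ x, G x ∂μ = W.subtypeL (∫ x, P (G x) ∂μ) := by
    rw [← W.subtypeL.integral_comp_comm (P.integrable_comp hGi)]
    refine integral_congr_ae ?_
    filter_upwards [μ.support_mem_ae] with x hx using (hPG x hx).symm
  rw [heq]
  refine Submodule.span_mono ?_
    (Submodule.apply_mem_span_image_of_mem_span (W.subtype.restrictScalars NNReal) hW)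
  rw [himage]
  exact image_preimage_subset _ _

end IntegralMemHull

section MultiIndices

def multiIndicesDegreeLE (σ : Type*) [Fintype σ] [DecidableEq σ] (t : ℕ) :
    Finset (σ →₀ ℕ) :=
  (range (t + 1)).biUnion fun k => univ.finsuppAntidiag k

variable {σ : Type*} [Fintype σ] [DecidableEq σ] {t : ℕ}

theorem mem_multiIndicesDegreeLE {α : σ →₀ ℕ} :
    α ∈ multiIndicesDegreeLE σ t ↔ ∑ j, α j ≤ t := by
  simp [multiIndicesDegreeLE, mem_finsuppAntidiag]

theorem card_multiIndicesDegreeLE :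
    #(multiIndicesDegreeLE σ t) = (Fintype.card σ + t).choose (Fintype.card σ) := by
  rw [multiIndicesDegreeLE, card_biUnion]
  · simp_rw [card_finsuppAntidiag_nat_eq_multichoose, card_univ]
    rw [Nat.sum_range_multichoose, add_comm]
  · intro k _ l _ hkl
    exact disjoint_left.mpr fun α hk hl => hkl <| by
      rw [mem_finsuppAntidiag] at hk hl
      rw [← hk.1, ← hl.1]

end MultiIndices

/-- Tchakaloff: a positive Borel measure on `ℝⁿ` with finite moments up to
degree `t` admits an `r`-atomic representation of its moments with `r ≤ C(n+t, n)`,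
positive weights, and points in the support of the measure. -/
theorem stmt2 (n t : ℕ) (μ : Measure (Fin n → ℝ))
    (hmom : ∀ α : Fin n →₀ ℕ, (∑ j, α j) ≤ t →
      Integrable (fun x : Fin n → ℝ => ∏ j, x j ^ α j) μ) :
    ∃ r : ℕ, r ≤ Nat.choose (n + t) n ∧
      ∃ (w : Fin r → ℝ) (ζ : Fin r → (Fin n → ℝ)),
        (∀ i, 0 < w i) ∧ (∀ i, ζ i ∈ measureSupport μ) ∧
        ∀ α : Fin n →₀ ℕ, (∑ j, α j) ≤ t →
          (∫ x, (∏ j, x j ^ α j) ∂μ) = ∑ i, w i * ∏ j, (ζ i j) ^ α j := by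
  let S := multiIndicesDegreeLE (Fin n) t
  let G : (Fin n → ℝ) → S → ℝ := fun x α => ∏ j, x j ^ (α : Fin n →₀ ℕ) j
  have hGi (α : S) : Integrable (fun x => G x α) μ :=
    hmom α (mem_multiIndicesDegreeLE.mp α.2)
  obtain ⟨r, hr, w, v, hw, hv, hsum⟩ := PointedCone.exists_fin_pos_sum_eq_of_mem_hull
    (integral_mem_hull_image_support (by fun_prop) (Integrable.of_eval hGi))
  choose ζ hζ hGζ using hv
  refine ⟨r, ?_, w, ζ, hw, fun i => measureSupport_eq_support μ ▸ hζ i, fun α hα => ?_⟩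
  · simpa [S, card_multiIndicesDegreeLE] using hr
  · have := congrFun hsum ⟨α, mem_multiIndicesDegreeLE.mpr hα⟩
    rw [eval_integral hGi] at this
    simpa [G, ← hGζ] using this.symm
end

section
/- Let V be a finite-dimensional subspace of R = ℝ[x₁,…,xₙ], let Λ : V → ℝ be a linear form, and suppose σ = ∑_{i=1}^r wᵢ e_{ζᵢ} (with wᵢ ∈ ℝ, ζᵢ ∈ ℝⁿ) is a cubature formula for Λ exact on V, i.e. σ(v) = Λ(v) for all v ∈ V. Then for any subspaces W, W' ⊆ V such that w·w' ∈ V for all w ∈ W and w' ∈ W', the rank of the bilinear form H_Λ^{W,W'} : (w, w') ↦ Λ(w·w') on W × W' is at most r. In particular, a cubature formula exact on V requires at least r_c(Λ) points, where r_c(Λ) is the maximum of these ranks over all such pairs (W, W'). -/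
open MvPolynomial

/-- if `σ = ∑ᵢ wᵢ e_{ζᵢ}` is a cubature formula for `Λ` exact on `V`, then
for any subspaces `W, W' ⊆ V` with `W·W' ⊆ V`, the bilinear form
`(w, w') ↦ Λ(w·w')` on `W × W'` has rank at most `r`. -/
theorem stmt3 (n r : ℕ) (V : Submodule ℝ (MvPolynomial (Fin n) ℝ)) [FiniteDimensional ℝ V]
    (Λ : V →ₗ[ℝ] ℝ) (w : Fin r → ℝ) (ζ : Fin r → (Fin n → ℝ))
    (hex : ∀ (v : MvPolynomial (Fin n) ℝ) (hv : v ∈ V),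
      Λ ⟨v, hv⟩ = ∑ i, w i * MvPolynomial.eval (ζ i) v)
    (W W' : Submodule ℝ (MvPolynomial (Fin n) ℝ)) (hWV : W ≤ V) (hW'V : W' ≤ V)
    (hmul : ∀ p ∈ W, ∀ q ∈ W', p * q ∈ V)
    (H : W →ₗ[ℝ] Module.Dual ℝ W')
    (hH : ∀ (p : W) (q : W'), H p q = Λ ⟨(p : MvPolynomial (Fin n) ℝ) * (q : MvPolynomial (Fin n) ℝ),
      hmul p p.2 q q.2⟩) :
    LinearMap.rank H ≤ (r : Cardinal) := by
  set A : W →ₗ[ℝ] (Fin r → ℝ) :=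
    { toFun := fun p i => w i * MvPolynomial.eval (ζ i) (p : MvPolynomial (Fin n) ℝ)
      map_add' := by intro p q; funext i; simp [mul_add]
      map_smul' := by intro c p; funext i; simp; ring } with hA
  set B : (Fin r → ℝ) →ₗ[ℝ] Module.Dual ℝ W' :=
    { toFun := fun c =>
        { toFun := fun q => ∑ i, c i * MvPolynomial.eval (ζ i) (q : MvPolynomial (Fin n) ℝ)
          map_add' := by intro p q; simp [mul_add, Finset.sum_add_distrib]
          map_smul' := by
            intro a q
            simp [Finset.mul_sum]
            apply Finset.sum_congr rfl
            intro i _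
            ring }
      map_add' := by
        intro c d; ext q; simp [add_mul, Finset.sum_add_distrib]
      map_smul' := by
        intro a c; ext q
        simp [Finset.mul_sum]
        apply Finset.sum_congr rfl
        intro i _
        ring } with hB
  have hHBA : H = B.comp A := by
    ext p q
    rw [hH p q, hex]
    simp [hA, hB]
    apply Finset.sum_congr rfl
    intro i _
    ring
  calc LinearMap.rank H = LinearMap.rank (B.comp A) := by rw [hHBA]
    _ ≤ LinearMap.rank B := LinearMap.rank_comp_le_left A B
    _ ≤ Module.rank ℝ (Fin r → ℝ) := LinearMap.rank_le_domain B
    _ = r := by simp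
end

section
/- Let V be a finite-dimensional subspace of R = ℝ[x₁,…,xₙ], let Λ : V → ℝ be a linear form, and let W ⊆ V be a subspace such that w·w' ∈ V for all w, w' ∈ W and such that Λ(p²) > 0 for every nonzero p ∈ W. Then any cubature formula σ = ∑_{i=1}^r wᵢ e_{ζᵢ} (wᵢ ∈ ℝ, ζᵢ ∈ ℝⁿ) with σ(v) = Λ(v) for all v ∈ V satisfies r ≥ dim W. -/
open MvPolynomial

/-- if `W ⊆ V` with `W·W ⊆ V` and `Λ(p²) > 0` for every nonzero `p ∈ W`,
then any cubature formula `σ = ∑ᵢ wᵢ e_{ζᵢ}` exact for `Λ` on `V` has at least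
`dim W` points. -/
theorem stmt4 (n r : ℕ) (V W : Submodule ℝ (MvPolynomial (Fin n) ℝ)) [FiniteDimensional ℝ V]
    (Λ : V →ₗ[ℝ] ℝ) (hWV : W ≤ V) (hmul : ∀ p ∈ W, ∀ q ∈ W, p * q ∈ V)
    (hpos : ∀ (p : MvPolynomial (Fin n) ℝ) (hp : p ∈ W), p ≠ 0 →
      0 < Λ ⟨p * p, hmul p hp p hp⟩)
    (w : Fin r → ℝ) (ζ : Fin r → (Fin n → ℝ))
    (hex : ∀ (v : MvPolynomial (Fin n) ℝ) (hv : v ∈ V),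
      Λ ⟨v, hv⟩ = ∑ i, w i * MvPolynomial.eval (ζ i) v) :
    Module.finrank ℝ W ≤ r := by
  let L : W →ₗ[ℝ] (Fin r → ℝ) :=
    { toFun := fun p i => MvPolynomial.eval (ζ i) (p : MvPolynomial (Fin n) ℝ)
      map_add' := by intro p q; funext i; simp
      map_smul' := by intro c p; funext i; simp }
  have hinj : Function.Injective L := by
    rw [← LinearMap.ker_eq_bot, Submodule.eq_bot_iff]
    rintro ⟨p, hp⟩ hker
    have hz : ∀ i, MvPolynomial.eval (ζ i) p = 0 := fun i => congrFun hker i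
    by_contra h
    have hpne : p ≠ 0 := by
      intro hp0; apply h; ext; simp [hp0]
    have := hpos p hp hpne
    rw [hex (p * p) (hmul p hp p hp)] at this
    simp [hz] at this
  calc Module.finrank ℝ W ≤ Module.finrank ℝ (Fin r → ℝ) :=
        LinearMap.finrank_le_finrank_of_injective hinj
    _ = r := by simp
end

section
/- Let d ≥ 0 and let Λ be a linear form on the space R_d of polynomials of degree ≤ d in ℝ[x₁,…,xₙ] such that Λ(p²) > 0 for every nonzero polynomial p of degree ≤ ⌊d/2⌋ (as holds when Λ is integration against a positive weight on a domain with nonempty interior). Then any cubature formula Λ(v) = ∑_{i=1}^r wᵢ v(ζᵢ), valid for all v ∈ R_d with wᵢ ∈ ℝ and ζᵢ ∈ ℝⁿ, satisfies r ≥ dim R_{⌊d/2⌋} = C(⌊d/2⌋ + n, n). -/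
open MvPolynomial

/-- Padding equivalence: tuples with sum ≤ m correspond to (n+1)-tuples with sum = m. -/
def eAux (n m : ℕ) : {g : Fin n → ℕ // ∑ i, g i ≤ m} ≃ {h : Fin (n+1) → ℕ // ∑ i, h i = m} where
  toFun g := ⟨Fin.snoc g.1 (m - ∑ i, g.1 i), by
    have := g.2
    rw [Fin.sum_univ_castSucc]
    simp only [Fin.snoc_castSucc, Fin.snoc_last]
    omega⟩
  invFun h := ⟨Fin.init h.1, by
    have := h.2
    rw [Fin.sum_univ_castSucc] at this
    have h2 : ∑ i, Fin.init h.1 i = ∑ i : Fin n, h.1 i.castSucc := rfl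
    omega⟩
  left_inv g := Subtype.ext <| funext fun i => by simp [Fin.init]
  right_inv h := by
    have := h.2
    rw [Fin.sum_univ_castSucc] at this
    refine Subtype.ext ?_
    show Fin.snoc (Fin.init h.1) (m - ∑ i, Fin.init h.1 i) = h.1
    have h2 : ∑ i, Fin.init h.1 i = ∑ i : Fin n, h.1 i.castSucc := rfl
    have h3 : m - ∑ i, Fin.init h.1 i = h.1 (Fin.last n) := by omega
    rw [h3, Fin.snoc_init_self]

noncomputable def eS1 (n m : ℕ) :
    {s : Fin n →₀ ℕ // (s.sum fun _ e => e) ≤ m} ≃ {g : Fin n → ℕ // ∑ i, g i ≤ m} :=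
  (Finsupp.equivFunOnFinite).subtypeEquiv (fun f => by
      rw [Finsupp.sum_fintype _ _ (fun _ => rfl)]; rfl)

noncomputable def eS2 (n m : ℕ) :
    {h : Fin (n+1) → ℕ // ∑ i, h i = m} ≃ {f : Fin (n+1) →₀ ℕ // (f.sum fun _ e => e) = m} :=
  (Finsupp.equivFunOnFinite.symm).subtypeEquiv (fun h => by
      rw [Finsupp.sum_fintype _ _ (fun _ => rfl)]; rfl)

noncomputable def eS3 (n m : ℕ) :
    {f : Fin (n+1) →₀ ℕ // (f.sum fun _ e => e) = m} ≃ Sym (Fin (n+1)) m :=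
  (Multiset.toFinsupp.symm.toEquiv).subtypeEquiv (fun f => by
      change _ ↔ Multiset.card (Finsupp.toMultiset f) = m
      rw [Finsupp.card_toMultiset]
      rfl)

noncomputable def eS (n m : ℕ) :
    {s : Fin n →₀ ℕ // (s.sum fun _ e => e) ≤ m} ≃ Sym (Fin (n+1)) m :=
  ((eS1 n m).trans (eAux n m)).trans ((eS2 n m).trans (eS3 n m))

theorem card_eS (n m : ℕ) :
    Nat.card {s : Fin n →₀ ℕ // (s.sum fun _ e => e) ≤ m} = Nat.choose (m + n) n := by
  rw [Nat.card_congr (eS n m), Nat.card_eq_fintype_card, Sym.card_sym_fin_eq_multichoose,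
    Nat.multichoose_eq]
  have h1 : n + 1 + m - 1 = m + n := by omega
  rw [h1]
  have h2 := Nat.choose_symm (show m ≤ m + n by omega)
  rw [Nat.add_sub_cancel_left] at h2
  exact h2.symm

/-- if `Λ` is a linear form on `R_d = ℝ[x₁,…,xₙ]_{≤d}` with `Λ(p²) > 0` for
every nonzero `p` of degree `≤ ⌊d/2⌋`, then any cubature formula for `Λ` exact on `R_d`
has at least `dim R_{⌊d/2⌋} = C(⌊d/2⌋ + n, n)` points. -/
theorem stmt5 (n d r : ℕ)
    (Λ : (MvPolynomial.restrictTotalDegree (Fin n) ℝ d) →ₗ[ℝ] ℝ)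
    (hpos : ∀ (p : MvPolynomial (Fin n) ℝ)
      (hp2 : p ^ 2 ∈ MvPolynomial.restrictTotalDegree (Fin n) ℝ d),
      p.totalDegree ≤ d / 2 → p ≠ 0 → 0 < Λ ⟨p ^ 2, hp2⟩)
    (w : Fin r → ℝ) (ζ : Fin r → (Fin n → ℝ))
    (hcub : ∀ (v : MvPolynomial (Fin n) ℝ) (hv : v ∈ MvPolynomial.restrictTotalDegree (Fin n) ℝ d),
      Λ ⟨v, hv⟩ = ∑ i, w i * MvPolynomial.eval (ζ i) v) :
    Nat.choose (d / 2 + n) n ≤ r := by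
  set m := d / 2 with hm
  -- evaluation map
  let E : (restrictTotalDegree (Fin n) ℝ m) →ₗ[ℝ] (Fin r → ℝ) :=
    LinearMap.pi fun i => ((MvPolynomial.aeval (ζ i)).toLinearMap).comp
      (Submodule.subtype _)
  have hinj : Function.Injective E := by
    rw [← LinearMap.ker_eq_bot, LinearMap.ker_eq_bot']
    intro p hp
    by_contra hne
    have hp0 : (p : MvPolynomial (Fin n) ℝ) ≠ 0 := fun h => hne (Subtype.ext h)
    have hdeg : (p : MvPolynomial (Fin n) ℝ).totalDegree ≤ m :=
      (mem_restrictTotalDegree _ _ _).mp p.2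
    have hsq : ((p : MvPolynomial (Fin n) ℝ)) ^ 2 ∈ restrictTotalDegree (Fin n) ℝ d := by
      rw [mem_restrictTotalDegree]
      calc ((p : MvPolynomial (Fin n) ℝ) ^ 2).totalDegree
          ≤ 2 * (p : MvPolynomial (Fin n) ℝ).totalDegree := totalDegree_pow _ _
        _ ≤ 2 * m := by omega
        _ ≤ d := by omega
    have hpos' := hpos _ hsq hdeg hp0
    rw [hcub _ hsq] at hpos'
    have heval : ∀ i, MvPolynomial.eval (ζ i) (p : MvPolynomial (Fin n) ℝ) = 0 := by
      intro i
      exact congrFun hp i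
    simp only [map_pow, heval] at hpos'
    simp at hpos'
  have hle : Module.finrank ℝ (restrictTotalDegree (Fin n) ℝ m) ≤
      Module.finrank ℝ (Fin r → ℝ) :=
    LinearMap.finrank_le_finrank_of_injective hinj
  rw [Module.finrank_pi, Fintype.card_fin] at hle
  have hfr : Module.finrank ℝ (restrictTotalDegree (Fin n) ℝ m) = Nat.choose (m + n) n := by
    have : Fintype ↑{s : Fin n →₀ ℕ | (s.sum fun _ e => e) ≤ m} :=
      Fintype.ofEquiv _ (eS n m).symm
    show Module.finrank ℝ
      (MvPolynomial.restrictSupport ℝ {s : Fin n →₀ ℕ | (s.sum fun _ e => e) ≤ m}) =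
      (m + n).choose n
    rw [Module.finrank_eq_card_basis (MvPolynomial.basisRestrictSupport ℝ
      { s : Fin n →₀ ℕ | (s.sum fun _ e => e) ≤ m }), ← Nat.card_eq_fintype_card]
    exact card_eS n m
  omega
end

section
/- Let V ⊆ R = ℝ[x₁,…,xₙ] be a finite-dimensional vector space and I : V → ℝ a linear form. Suppose there exist a finite set B of monomials connected to 1 with V ⊆ ⟨B⁺·B⁺⟩ and a linear form σ on ⟨B⁺·B⁺⟩ such that σ(v) = I(v) for all v ∈ V, the bilinear form H_σ^{B,B} is positive semidefinite, and rank H_σ^{B,B} = rank H_σ^{B⁺,B⁺} = |B| = r. Then there exist weights wᵢ > 0 and points ζᵢ ∈ ℝⁿ, i = 1,…,r, such that I(v) = ∑_{i=1}^r wᵢ v(ζᵢ) for all v ∈ V. -/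
open MvPolynomial Matrix

/-- A set `B` of monomials (identified with their exponent multi-indices) is
connected to 1 if it contains `1 = x^0` and every `m ≠ 1` in `B` is `xᵢ·m'`
for some variable `xᵢ` and some `m' ∈ B`. -/
def connectedTo1 {n : ℕ} (B : Finset (Fin n →₀ ℕ)) : Prop :=
  (0 : Fin n →₀ ℕ) ∈ B ∧ ∀ α ∈ B, α ≠ 0 → ∃ i : Fin n, ∃ β ∈ B, α = β + Finsupp.single i 1

/-- `B⁺ = B ∪ x₁B ∪ ⋯ ∪ xₙB` on the level of exponents. -/
noncomputable def plusSet {n : ℕ} (B : Finset (Fin n →₀ ℕ)) : Finset (Fin n →₀ ℕ) :=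
  B ∪ Finset.univ.biUnion fun i : Fin n => B.image (· + Finsupp.single i 1)

/-- The product set `B·B' = {m·m' : m ∈ B, m' ∈ B'}` on the level of exponents. -/
noncomputable def mulSet {n : ℕ} (B B' : Finset (Fin n →₀ ℕ)) : Finset (Fin n →₀ ℕ) :=
  (B ×ˢ B').image fun p => p.1 + p.2

/-- The span `⟨B⟩` of a set of monomials. -/
noncomputable def spanMon {n : ℕ} (B : Finset (Fin n →₀ ℕ)) :
    Submodule ℝ (MvPolynomial (Fin n) ℝ) :=
  Submodule.span ℝ ((fun α => (monomial α (1 : ℝ))) '' (B : Set (Fin n →₀ ℕ)))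

/-- The (truncated) Hankel matrix `[σ(m·m')]_{m ∈ B, m' ∈ B'}`. -/
noncomputable def hMat {n : ℕ} (σ : Module.Dual ℝ (MvPolynomial (Fin n) ℝ))
    (B B' : Finset (Fin n →₀ ℕ)) : Matrix ↥B ↥B' ℝ :=
  Matrix.of fun m m' => σ (monomial ((m : Fin n →₀ ℕ) + (m' : Fin n →₀ ℕ)) 1)

/-!
Flatness, `rank H_σ^{B⁺,B⁺} = rank H_σ^{B,B}`, lets every `x^α` with `α ∈ B⁺` be reduced modulo
the kernel of the Hankel form to a vector `normalForm α ∈ ℝ^B`, so that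
`σ(x^{α+β}) = ⟨normalForm α, normalForm β⟩_H` for the positive definite `H = H_σ^{B,B}`.
The multiplication matrices are `H`-self-adjoint and commute, hence `normalForm 0 = ∑_χ v_χ` with
`H`-orthogonal joint eigenvectors `v_χ` of joint eigenvalue `χ ∈ ℝⁿ`; as `B` is connected to `1`,
`normalForm α = ∑_χ χ^α v_χ`. Expanding the inner product gives the cubature formula
`σ(x^{α+β}) = ∑_χ ⟨v_χ, v_χ⟩_H χ^{α+β}`, and the `v_χ` form a basis of `ℝ^B`, so there are
exactly `|B|` nodes.
-/

namespace Matrix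

variable {R K ι κ : Type*} [Fintype ι]

theorem isUnit_of_rank_eq_card [Field K] [DecidableEq ι] {A : Matrix ι ι K}
    (h : A.rank = Fintype.card ι) : IsUnit A := by
  rw [← mulVec_surjective_iff_isUnit, ← coe_mulVecLin, ← LinearMap.range_eq_top]
  exact Submodule.eq_top_of_finrank_eq (by rw [← rank, h, Module.finrank_fintype_fun_eq_card])

theorem eq_submatrix_mul_inv_mul_of_rank_le [Field K] [DecidableEq ι] {p q : Type*} [Fintype p]
    [Fintype q] (G : Matrix p q K) (r : ι → p) (c : ι → q) (hA : IsUnit (G.submatrix r c))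
    (hrk : G.rank ≤ (G.submatrix r c).rank) :
    G = G.submatrix id c * (G.submatrix r c)⁻¹ * G.submatrix r id := by
  have hle : Submodule.span K (Set.range (G.submatrix id c).col) ≤
      Submodule.span K (Set.range G.col) :=
    Submodule.span_mono (Set.range_comp_subset_range c G.col)
  have hspan : Submodule.span K (Set.range (G.submatrix id c).col) =
      Submodule.span K (Set.range G.col) := by
    refine Submodule.eq_of_le_of_finrank_le hle ?_
    rw [← rank_eq_finrank_span_cols, ← rank_eq_finrank_span_cols]
    exact hrk.trans (rank_submatrix_le (G.submatrix id c) r id)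
  have hcol : ∀ j, ∃ x : ι → K, G.submatrix id c *ᵥ x = G.col j := fun j => by
    rw [← coe_mulVecLin, ← LinearMap.mem_range, range_mulVecLin, hspan]
    exact Submodule.subset_span ⟨j, rfl⟩
  choose x hx using hcol
  have hG : G = G.submatrix id c * (of fun k j => x j k) := by
    ext i j
    exact (congrFun (hx j) i).symm
  have hrow : G.submatrix r id = G.submatrix r c * (of fun k j => x j k) := by
    conv_lhs => rw [hG]
    rfl
  rw [hrow, Matrix.mul_assoc, nonsing_inv_mul_cancel_left _ _ ((isUnit_iff_isUnit_det _).mp hA),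
    ← hG]

theorem sum_smul_dotProduct_mulVec_sum_smul [CommSemiring R] (H : Matrix ι ι R) (s : Finset κ)
    (u : κ → ι → R) (a b : κ → R)
    (horth : ∀ i ∈ s, ∀ j ∈ s, i ≠ j → u i ⬝ᵥ H *ᵥ u j = 0) :
    (∑ i ∈ s, a i • u i) ⬝ᵥ H *ᵥ (∑ i ∈ s, b i • u i) =
      ∑ i ∈ s, a i * b i * (u i ⬝ᵥ H *ᵥ u i) := by
  simp_rw [mulVec_sum, mulVec_smul, dotProduct_sum, sum_dotProduct, dotProduct_smul,
    smul_dotProduct, smul_eq_mul]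
  refine Finset.sum_congr rfl fun i hi => ?_
  rw [Finset.sum_eq_single_of_mem i hi fun j hj hji => by rw [horth j hj i hi hji]; ring]
  ring

theorem mulVec_dotProduct_mulVec_of_transpose_mul_eq [CommSemiring R] {H N : Matrix ι ι R}
    (hN : Nᵀ * H = H * N) (u v : ι → R) :
    (N *ᵥ u) ⬝ᵥ H *ᵥ v = u ⬝ᵥ H *ᵥ (N *ᵥ v) := by
  rw [dotProduct_mulVec, ← vecMul_transpose, vecMul_vecMul, hN, ← dotProduct_mulVec,
    mulVec_mulVec]

theorem dotProduct_mulVec_eq_zero_of_mulVec_eq_smul [Field K] {H N : Matrix ι ι K}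
    (hN : Nᵀ * H = H * N) {u v : ι → K} {a b : K} (hu : N *ᵥ u = a • u) (hv : N *ᵥ v = b • v)
    (hab : a ≠ b) : u ⬝ᵥ H *ᵥ v = 0 := by
  have h := mulVec_dotProduct_mulVec_of_transpose_mul_eq hN u v
  rw [hu, hv, mulVec_smul, smul_dotProduct, dotProduct_smul, smul_eq_mul, smul_eq_mul] at h
  exact (mul_eq_mul_right_iff.mp h).resolve_left hab

theorem exists_finsupp_sum_eq_of_commute {H : Matrix ι ι ℝ} (hH : H.PosDef)
    (N : κ → Matrix ι ι ℝ) (hN : ∀ i, (N i)ᵀ * H = H * N i)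
    (hcomm : ∀ i k, Commute (N i) (N k)) (v : ι → ℝ) :
    ∃ f : (κ → ℝ) →₀ (ι → ℝ), (∀ χ i, N i *ᵥ f χ = χ i • f χ) ∧ (f.sum fun _ x => x) = v := by
  let iN : NormedAddCommGroup (ι → ℝ) := H.toNormedAddCommGroup hH
  let iP : @InnerProductSpace ℝ (ι → ℝ) _ iN.toSeminormedAddCommGroup :=
    H.toInnerProductSpace hH.posSemidef
  let T : κ → (ι → ℝ) →ₗ[ℝ] (ι → ℝ) := fun i => (N i).mulVecLin
  have hsymm : ∀ i, @LinearMap.IsSymmetric ℝ (ι → ℝ) _ iN.toSeminormedAddCommGroup iP (T i) :=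
    fun i x y => by
      change (H *ᵥ y) ⬝ᵥ star (N i *ᵥ x) = (H *ᵥ (N i *ᵥ y)) ⬝ᵥ star x
      rw [star_trivial, star_trivial, dotProduct_comm, dotProduct_comm _ x,
        mulVec_dotProduct_mulVec_of_transpose_mul_eq (hN i)]
  have hcommT : Pairwise (Function.onFun Commute T) := fun i k _ => by
    change T i * T k = T k * T i
    rw [Module.End.mul_eq_comp, Module.End.mul_eq_comp, ← mulVecLin_mul, ← mulVecLin_mul,
      (hcomm i k).eq]
  have hv : v ∈ ⨆ χ : κ → ℝ, ⨅ i, Module.End.eigenspace (T i) (χ i) := by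
    rw [@LinearMap.IsSymmetric.iSup_iInf_eq_top_of_commute ℝ (ι → ℝ) _ iN iP _ _ T hsymm hcommT]
    exact Submodule.mem_top
  obtain ⟨f, hf, hsum⟩ := (Submodule.mem_iSup_iff_exists_finsupp _ _).mp hv
  exact ⟨f, fun χ i => Module.End.mem_eigenspace_iff.mp ((Submodule.mem_iInf _).mp (hf χ) i),
    hsum⟩

theorem card_eq_of_span_eq_top_of_dotProduct_mulVec_eq_zero [Field K] (H : Matrix ι ι K)
    {s : Finset κ} {u : κ → ι → K} (horth : ∀ i ∈ s, ∀ j ∈ s, i ≠ j → u i ⬝ᵥ H *ᵥ u j = 0)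
    (hself : ∀ i ∈ s, u i ⬝ᵥ H *ᵥ u i ≠ 0) (hspan : Submodule.span K (u '' s) = ⊤) :
    s.card = Fintype.card ι := by
  classical
  have hli : LinearIndependent K fun i : s => u i := by
    refine LinearMap.linearIndependent_of_isOrthoᵢ (B := toLinearMap₂' K H) (fun i j hij => ?_)
      fun i => ?_
    · rw [Function.onFun, toLinearMap₂'_apply']
      exact horth i i.2 j j.2 (Subtype.coe_ne_coe.mpr hij)
    · rw [toLinearMap₂'_apply']
      exact hself i i.2
  have hrange : Set.range (fun i : s => u i) = u '' s := by ext; simp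
  rw [← Fintype.card_coe, ← finrank_span_eq_card hli, hrange, hspan, finrank_top,
    Module.finrank_fintype_fun_eq_card]

end Matrix

variable {n : ℕ}

section Monomials

variable {B : Finset (Fin n →₀ ℕ)}

theorem mem_plusSet_of_mem {α : Fin n →₀ ℕ} (h : α ∈ B) : α ∈ plusSet B :=
  Finset.mem_union_left _ h

theorem add_single_mem_plusSet {β : Fin n →₀ ℕ} (h : β ∈ B) (i : Fin n) :
    β + Finsupp.single i 1 ∈ plusSet B :=
  Finset.mem_union_right _
    (Finset.mem_biUnion.mpr ⟨i, Finset.mem_univ i, Finset.mem_image_of_mem _ h⟩)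

theorem connectedTo1.induction_plusSet (hB : connectedTo1 B) {P : (Fin n →₀ ℕ) → Prop} (zero : P 0)
    (step : ∀ β ∈ B, ∀ i, P β → P (β + Finsupp.single i 1)) : ∀ α ∈ plusSet B, P α := by
  have hmem : ∀ d, ∀ α ∈ B, α.degree = d → P α := by
    intro d
    induction d using Nat.strong_induction_on with
    | _ d ih =>
      intro α hα hd
      obtain rfl | h0 := eq_or_ne α 0
      · exact zero
      obtain ⟨i, β, hβ, rfl⟩ := hB.2 α hα h0
      refine step β hβ i (ih _ ?_ β hβ rfl)
      rw [← hd, map_add, Finsupp.degree_single]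
      omega
  intro α hα
  simp only [plusSet, Finset.mem_union, Finset.mem_biUnion, Finset.mem_image] at hα
  rcases hα with hα | ⟨i, -, β, hβ, rfl⟩
  · exact hmem _ α hα rfl
  · exact step β hβ i (hmem _ β hβ rfl)

end Monomials

section Hankel

variable (σ : Module.Dual ℝ (MvPolynomial (Fin n) ℝ))

theorem hMat_transpose (B B' : Finset (Fin n →₀ ℕ)) : (hMat σ B B')ᵀ = hMat σ B' B := by
  ext a b
  simp only [transpose_apply, hMat, of_apply, add_comm]

theorem dotProduct_hMat_mulVec (B B' : Finset (Fin n →₀ ℕ)) (x : ↥B → ℝ) (y : ↥B' → ℝ) :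
    x ⬝ᵥ hMat σ B B' *ᵥ y =
      σ ((∑ b, x b • monomial (b : Fin n →₀ ℕ) 1) *
        ∑ b', y b' • monomial (b' : Fin n →₀ ℕ) 1) := by
  rw [Finset.sum_mul_sum, map_sum]
  simp_rw [map_sum, smul_mul_smul_comm, monomial_mul, mul_one, map_smul, smul_eq_mul, dotProduct,
    mulVec, dotProduct, hMat, of_apply, Finset.mul_sum]
  exact Finset.sum_congr rfl fun a _ => Finset.sum_congr rfl fun b _ => by ring

variable {σ} {B : Finset (Fin n →₀ ℕ)}

theorem hMat_posSemidef (hpsd : ∀ p ∈ spanMon B, 0 ≤ σ (p * p)) : (hMat σ B B).PosSemidef := by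
  refine .of_dotProduct_mulVec_nonneg ?_ fun x => ?_
  · rw [IsHermitian, conjTranspose_eq_transpose_of_trivial, hMat_transpose]
  · rw [star_trivial, dotProduct_hMat_mulVec]
    exact hpsd _ (Submodule.sum_mem _ fun b _ =>
      Submodule.smul_mem _ _ (Submodule.subset_span ⟨b, b.2, rfl⟩))

theorem hMat_posDef (hpsd : ∀ p ∈ spanMon B, 0 ≤ σ (p * p))
    (hrk : (hMat σ B B).rank = B.card) : (hMat σ B B).PosDef :=
  (hMat_posSemidef hpsd).posDef_iff_isUnit.mpr
    (isUnit_of_rank_eq_card (by rw [hrk, Fintype.card_coe]))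

end Hankel

section NormalForm

variable (σ : Module.Dual ℝ (MvPolynomial (Fin n) ℝ)) (B : Finset (Fin n →₀ ℕ))

noncomputable def hankelCol (α : Fin n →₀ ℕ) : ↥B → ℝ :=
  fun b => σ (monomial ((b : Fin n →₀ ℕ) + α) 1)

/-- The coordinates, in the basis `B`, of the class of `x^α` in `R / ker H_σ`. -/
noncomputable def normalForm (α : Fin n →₀ ℕ) : ↥B → ℝ :=
  (hMat σ B B)⁻¹ *ᵥ hankelCol σ B α

/-- The matrix of multiplication by `xᵢ` on `R / ker H_σ` in the basis `B`. -/
noncomputable def multMatrix (i : Fin n) : Matrix ↥B ↥B ℝ :=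
  of fun a b => normalForm σ B ((b : Fin n →₀ ℕ) + Finsupp.single i 1) a

theorem multMatrix_mulVec_single (i : Fin n) (b : ↥B) :
    multMatrix σ B i *ᵥ Pi.single b 1 =
      normalForm σ B ((b : Fin n →₀ ℕ) + Finsupp.single i 1) := by
  rw [mulVec_single_one]
  rfl

variable {σ B} (hH : IsUnit (hMat σ B B))
include hH

theorem hMat_mulVec_normalForm (α : Fin n →₀ ℕ) :
    hMat σ B B *ᵥ normalForm σ B α = hankelCol σ B α := by
  rw [normalForm, mulVec_mulVec, mul_nonsing_inv _ ((isUnit_iff_isUnit_det _).mp hH),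
    one_mulVec]

theorem normalForm_coe (b : ↥B) : normalForm σ B b = Pi.single b 1 := by
  refine mulVec_injective_iff_isUnit.mpr hH ?_
  rw [hMat_mulVec_normalForm hH, mulVec_single_one]
  rfl

theorem hMat_mul_multMatrix (i : Fin n) :
    hMat σ B B * multMatrix σ B i =
      of fun a b : ↥B =>
        σ (monomial ((a : Fin n →₀ ℕ) + (b : Fin n →₀ ℕ) + Finsupp.single i 1) 1) := by
  ext a b
  change (hMat σ B B *ᵥ normalForm σ B ((b : Fin n →₀ ℕ) + Finsupp.single i 1)) a = _
  rw [hMat_mulVec_normalForm hH, hankelCol, of_apply, add_assoc]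

theorem transpose_multMatrix_mul_hMat (i : Fin n) :
    (multMatrix σ B i)ᵀ * hMat σ B B = hMat σ B B * multMatrix σ B i := by
  conv_lhs => rw [← hMat_transpose, ← transpose_mul, hMat_mul_multMatrix hH]
  rw [hMat_mul_multMatrix hH]
  ext a b
  simp only [transpose_apply, of_apply, add_comm (b : Fin n →₀ ℕ)]

theorem monomial_add_eq_hankelCol_dotProduct_normalForm
    (hrk : (hMat σ (plusSet B) (plusSet B)).rank ≤ (hMat σ B B).rank)
    {α β : Fin n →₀ ℕ} (hα : α ∈ plusSet B) (hβ : β ∈ plusSet B) :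
    σ (monomial (α + β) 1) = hankelCol σ B α ⬝ᵥ normalForm σ B β := by
  let incl : ↥B → ↥(plusSet B) := fun b => ⟨b, mem_plusSet_of_mem b.2⟩
  have hG := congrFun₂ (eq_submatrix_mul_inv_mul_of_rank_le (hMat σ (plusSet B) (plusSet B))
    incl incl hH hrk) ⟨α, hα⟩ ⟨β, hβ⟩
  rw [Matrix.mul_assoc] at hG
  refine hG.trans ?_
  rw [mul_apply']
  congr 1
  funext b
  exact congrArg (fun γ => σ (monomial γ 1)) (add_comm _ _)

theorem normalForm_eq_sum_eval (hB : connectedTo1 B) (f : (Fin n → ℝ) →₀ (↥B → ℝ))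
    (heig : ∀ χ i, multMatrix σ B i *ᵥ f χ = χ i • f χ)
    (hsum : (f.sum fun _ x => x) = Pi.single ⟨0, hB.1⟩ 1) :
    ∀ α ∈ plusSet B, normalForm σ B α = ∑ χ ∈ f.support, eval χ (monomial α 1) • f χ := by
  refine hB.induction_plusSet ?_ fun β hβ i ih => ?_
  · simp only [← one_def, map_one, one_smul]
    exact (normalForm_coe hH ⟨0, hB.1⟩).trans hsum.symm
  · have hstep : normalForm σ B (β + Finsupp.single i 1) =
        multMatrix σ B i *ᵥ normalForm σ B β := by
      rw [normalForm_coe hH ⟨β, hβ⟩, multMatrix_mulVec_single]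
    rw [hstep, ih, mulVec_sum]
    refine Finset.sum_congr rfl fun χ _ => ?_
    rw [mulVec_smul, heig, smul_smul, monomial_add_single, eval_mul, eval_pow, eval_X, pow_one]

end NormalForm

section Flat

variable {σ : Module.Dual ℝ (MvPolynomial (Fin n) ℝ)} {B : Finset (Fin n →₀ ℕ)}
  (hH : IsUnit (hMat σ B B))
  (hflat : ∀ α ∈ plusSet B, ∀ β ∈ plusSet B,
    σ (monomial (α + β) 1) = hankelCol σ B α ⬝ᵥ normalForm σ B β)
include hH hflat

theorem normalForm_dotProduct_hMat_mulVec {α β : Fin n →₀ ℕ} (hα : α ∈ plusSet B)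
    (hβ : β ∈ plusSet B) :
    normalForm σ B α ⬝ᵥ hMat σ B B *ᵥ normalForm σ B β = σ (monomial (α + β) 1) := by
  rw [hMat_mulVec_normalForm hH, dotProduct_comm, add_comm, hflat β hβ α hα]

theorem hMat_mul_multMatrix_mul (i k : Fin n) :
    hMat σ B B * (multMatrix σ B i * multMatrix σ B k) =
      of fun a b : ↥B => σ (monomial ((a : Fin n →₀ ℕ) + Finsupp.single i 1 +
        ((b : Fin n →₀ ℕ) + Finsupp.single k 1)) 1) := by
  ext a b
  rw [← Matrix.mul_assoc, hMat_mul_multMatrix hH, of_apply,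
    hflat _ (add_single_mem_plusSet a.2 i) _ (add_single_mem_plusSet b.2 k), mul_apply']
  congr 1
  funext x
  simp only [hankelCol, of_apply]
  congr 2
  ac_rfl

theorem multMatrix_commute (i k : Fin n) : Commute (multMatrix σ B i) (multMatrix σ B k) := by
  refine hH.mul_left_cancel ?_
  rw [hMat_mul_multMatrix_mul hH hflat, hMat_mul_multMatrix_mul hH hflat]
  ext a b
  simp only [of_apply]
  congr 2
  ac_rfl

end Flat

section Cubature

variable {σ : Module.Dual ℝ (MvPolynomial (Fin n) ℝ)} {B : Finset (Fin n →₀ ℕ)}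

theorem exists_finset_weights_of_flat (hB : connectedTo1 B)
    (hpsd : ∀ p ∈ spanMon B, 0 ≤ σ (p * p)) (hrk1 : (hMat σ B B).rank = B.card)
    (hrk2 : (hMat σ (plusSet B) (plusSet B)).rank = B.card) :
    ∃ (s : Finset (Fin n → ℝ)) (W : (Fin n → ℝ) → ℝ), s.card = B.card ∧ (∀ χ ∈ s, 0 < W χ) ∧
      ∀ α ∈ plusSet B, ∀ β ∈ plusSet B,
        σ (monomial (α + β) 1) = ∑ χ ∈ s, W χ * eval χ (monomial (α + β) 1) := by
  have hPD := hMat_posDef hpsd hrk1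
  have hH := hPD.isUnit
  have hflat : ∀ α ∈ plusSet B, ∀ β ∈ plusSet B,
      σ (monomial (α + β) 1) = hankelCol σ B α ⬝ᵥ normalForm σ B β := fun α hα β hβ =>
    monomial_add_eq_hankelCol_dotProduct_normalForm hH (by rw [hrk1, hrk2]) hα hβ
  obtain ⟨f, heig, hsum⟩ := exists_finsupp_sum_eq_of_commute hPD (multMatrix σ B)
    (transpose_multMatrix_mul_hMat hH) (multMatrix_commute hH hflat) (Pi.single ⟨0, hB.1⟩ 1)
  have hnf := normalForm_eq_sum_eval hH hB f heig hsum
  have horth : ∀ χ ∈ f.support, ∀ χ' ∈ f.support, χ ≠ χ' →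
      f χ ⬝ᵥ hMat σ B B *ᵥ f χ' = 0 := fun χ _ χ' _ hne => by
    obtain ⟨i, hi⟩ := Function.ne_iff.mp hne
    exact dotProduct_mulVec_eq_zero_of_mulVec_eq_smul (transpose_multMatrix_mul_hMat hH i)
      (heig χ i) (heig χ' i) hi
  have hpos : ∀ χ ∈ f.support, 0 < f χ ⬝ᵥ hMat σ B B *ᵥ f χ := fun χ hχ => by
    simpa using hPD.dotProduct_mulVec_pos (Finsupp.mem_support_iff.mp hχ)
  have hspan : Submodule.span ℝ (f '' f.support) = ⊤ := by
    refine eq_top_iff.mpr ((Pi.basisFun ℝ ↥B).span_eq.symm.le.trans (Submodule.span_le.mpr ?_))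
    rintro _ ⟨b, rfl⟩
    rw [Pi.basisFun_apply, ← normalForm_coe hH, hnf b (mem_plusSet_of_mem b.2)]
    exact Submodule.sum_mem _ fun χ hχ =>
      Submodule.smul_mem _ _ (Submodule.subset_span ⟨χ, hχ, rfl⟩)
  refine ⟨f.support, fun χ => f χ ⬝ᵥ hMat σ B B *ᵥ f χ, ?_, hpos, fun α hα β hβ => ?_⟩
  · rw [card_eq_of_span_eq_top_of_dotProduct_mulVec_eq_zero _ horth
      (fun χ hχ => (hpos χ hχ).ne') hspan, Fintype.card_coe]
  · rw [← normalForm_dotProduct_hMat_mulVec hH hflat hα hβ, hnf α hα, hnf β hβ,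
      sum_smul_dotProduct_mulVec_sum_smul _ _ _ _ _ horth]
    refine Finset.sum_congr rfl fun χ _ => ?_
    rw [show monomial (α + β) (1 : ℝ) = monomial α 1 * monomial β 1 by
      rw [monomial_mul, mul_one], eval_mul]
    ring

theorem exists_cubature_of_flat (hB : connectedTo1 B)
    (hpsd : ∀ p ∈ spanMon B, 0 ≤ σ (p * p)) (hrk1 : (hMat σ B B).rank = B.card)
    (hrk2 : (hMat σ (plusSet B) (plusSet B)).rank = B.card) :
    ∃ (w : Fin B.card → ℝ) (ζ : Fin B.card → (Fin n → ℝ)), (∀ i, 0 < w i) ∧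
      ∀ p ∈ spanMon (mulSet (plusSet B) (plusSet B)), σ p = ∑ i, w i * eval (ζ i) p := by
  obtain ⟨s, W, hcard, hpos, hquad⟩ := exists_finset_weights_of_flat hB hpsd hrk1 hrk2
  let e : Fin B.card ≃ s := (s.equivFin.trans (finCongr hcard)).symm
  refine ⟨fun i => W (e i), fun i => e i, fun i => hpos _ (e i).2, fun p hp => ?_⟩
  let cubature : MvPolynomial (Fin n) ℝ →ₗ[ℝ] ℝ :=
    ∑ i, W (e i) • (MvPolynomial.aeval (e i : Fin n → ℝ)).toLinearMap
  refine (LinearMap.eqOn_span' (f := σ) (g := cubature) ?_ hp).trans ?_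
  · rintro _ ⟨γ, hγ, rfl⟩
    obtain ⟨⟨α, β⟩, hαβ, rfl⟩ := Finset.mem_image.mp hγ
    rw [hquad α (Finset.mem_product.mp hαβ).1 β (Finset.mem_product.mp hαβ).2,
      ← Finset.sum_coe_sort s, ← e.sum_comp]
    simp [cubature]
  · simp [cubature]

end Cubature

theorem stmt7_general (n : ℕ) (V : Submodule ℝ (MvPolynomial (Fin n) ℝ))
    (I : V →ₗ[ℝ] ℝ) (B : Finset (Fin n →₀ ℕ)) (hB : connectedTo1 B)
    (hV : V ≤ spanMon (mulSet (plusSet B) (plusSet B)))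
    (σ : Module.Dual ℝ (MvPolynomial (Fin n) ℝ))
    (hagree : ∀ (v : MvPolynomial (Fin n) ℝ) (hv : v ∈ V), σ v = I ⟨v, hv⟩)
    (hpsd : ∀ p ∈ spanMon B, 0 ≤ σ (p * p))
    (hrk1 : (hMat σ B B).rank = B.card)
    (hrk2 : (hMat σ (plusSet B) (plusSet B)).rank = B.card) :
    ∃ (w : Fin B.card → ℝ) (ζ : Fin B.card → (Fin n → ℝ)),
      (∀ i, 0 < w i) ∧
      ∀ (v : MvPolynomial (Fin n) ℝ) (hv : v ∈ V),
        I ⟨v, hv⟩ = ∑ i, w i * MvPolynomial.eval (ζ i) v := by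
  obtain ⟨w, ζ, hw, hcub⟩ := exists_cubature_of_flat hB hpsd hrk1 hrk2
  exact ⟨w, ζ, hw, fun v hv => (hagree v hv).symm.trans (hcub v (hV hv))⟩

/-- if `V ⊆ ⟨B⁺·B⁺⟩`, `σ` agrees with `I` on `V`, `H_σ^{B,B}` is positive
semidefinite and `rank H_σ^{B,B} = rank H_σ^{B⁺,B⁺} = |B| = r`, then `I` admits a
cubature formula with `r` positive weights and real points, exact on `V`. -/
theorem stmt7 (n : ℕ) (V : Submodule ℝ (MvPolynomial (Fin n) ℝ)) [FiniteDimensional ℝ V]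
    (I : V →ₗ[ℝ] ℝ) (B : Finset (Fin n →₀ ℕ)) (hB : connectedTo1 B)
    (hV : V ≤ spanMon (mulSet (plusSet B) (plusSet B)))
    (σ : Module.Dual ℝ (MvPolynomial (Fin n) ℝ))
    (hagree : ∀ (v : MvPolynomial (Fin n) ℝ) (hv : v ∈ V), σ v = I ⟨v, hv⟩)
    (hpsd : ∀ p ∈ spanMon B, 0 ≤ σ (p * p))
    (hrk1 : (hMat σ B B).rank = B.card)
    (hrk2 : (hMat σ (plusSet B) (plusSet B)).rank = B.card) :
    ∃ (w : Fin B.card → ℝ) (ζ : Fin B.card → (Fin n → ℝ)),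
      (∀ i, 0 < w i) ∧
      ∀ (v : MvPolynomial (Fin n) ℝ) (hv : v ∈ V),
        I ⟨v, hv⟩ = ∑ i, w i * MvPolynomial.eval (ζ i) v :=
  stmt7_general n V I B hB hV σ hagree hpsd hrk1 hrk2
end

section
/- Let B and B' be finite sets of monomials of R = ℝ[x₁,…,xₙ], each of size r and connected to 1, and let σ be a linear form on ⟨B⁺·B'⁺⟩ with rank H_σ^{B⁺,B'⁺} = rank H_σ^{B,B'} = |B| = |B'| = r. Let σ̃ be the unique flat extension of σ (a linear form on R agreeing with σ on ⟨B⁺·B'⁺⟩ whose Hankel operator H_{σ̃} has rank r). Then: (1) the images of B and of B' are bases of the quotient algebra A_{σ̃} = R/ker H_{σ̃}; (2) the matrix Mᵢ = [H_σ^{B,B'}]⁻¹ [H_σ^{xᵢB,B'}] is the matrix of the multiplication operator by xᵢ on A_{σ̃} in the basis B, where [H_σ^{xᵢB,B'}] = [σ(xᵢ·m·m')]_{m∈B, m'∈B'}; and (3) [H_σ^{B,xᵢB'}][H_σ^{B,B'}]⁻¹ is the transpose of the matrix of multiplication by xᵢ on A_{σ̃} in the basis B'. -/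
open MvPolynomial Matrix

set_option synthInstance.maxHeartbeats 1000000
set_option maxHeartbeats 1000000

/-- The Hankel operator associated to a linear form `σ` on `ℝ[x₁,…,xₙ]`:
it sends `p` to the linear form `q ↦ σ (p * q)`. -/
noncomputable def hankel {n : ℕ} (σ : Module.Dual ℝ (MvPolynomial (Fin n) ℝ)) :
    MvPolynomial (Fin n) ℝ →ₗ[ℝ] Module.Dual ℝ (MvPolynomial (Fin n) ℝ) :=
  (LinearMap.llcomp ℝ (MvPolynomial (Fin n) ℝ) (MvPolynomial (Fin n) ℝ) ℝ σ).comp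
    (LinearMap.mul ℝ (MvPolynomial (Fin n) ℝ))

/-- The shifted Hankel matrix `[σ(xᵢ·m·m')]_{m ∈ B, m' ∈ B'}`,
i.e. the matrix of `H_σ^{xᵢB,B'}` (equivalently of `H_σ^{B,xᵢB'}`). -/
noncomputable def hMatX {n : ℕ} (σ : Module.Dual ℝ (MvPolynomial (Fin n) ℝ)) (i : Fin n)
    (B B' : Finset (Fin n →₀ ℕ)) : Matrix ↥B ↥B' ℝ :=
  Matrix.of fun m m' => σ (X i * monomial ((m : Fin n →₀ ℕ) + (m' : Fin n →₀ ℕ)) 1)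

theorem hankel_apply {n : ℕ} (σ : Module.Dual ℝ (MvPolynomial (Fin n) ℝ)) (p q) :
    hankel σ p q = σ (p * q) := rfl

theorem spanMon_eq {n : ℕ} (C : Finset (Fin n →₀ ℕ)) :
    spanMon C = Submodule.span ℝ (Set.range fun γ : ↥C => monomial (γ : Fin n →₀ ℕ) (1:ℝ)) := by
  rw [spanMon]
  congr 1
  ext x
  simp [Set.range_comp ((monomial · (1:ℝ))) ((↑) : ↥C → (Fin n →₀ ℕ)), Subtype.range_coe]

theorem mem_ker_hankel {n : ℕ} (σ : Module.Dual ℝ (MvPolynomial (Fin n) ℝ)) (p) :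
    p ∈ LinearMap.ker (hankel σ) ↔ ∀ q, σ (p * q) = 0 := by
  simp only [LinearMap.mem_ker]
  constructor
  · intro h q; have := congrFun (congrArg DFunLike.coe h) q; simpa [hankel_apply] using this
  · intro h; apply LinearMap.ext; intro q; simpa [hankel_apply] using h q

theorem keyCompl {n r : ℕ} (C : Finset (Fin n →₀ ℕ)) {D : Finset (Fin n →₀ ℕ)}
    (hcard : C.card = r)
    (σt : Module.Dual ℝ (MvPolynomial (Fin n) ℝ))
    (hrkt : LinearMap.rank (hankel σt) = (r : Cardinal))
    (hind : ∀ c : ↥C → ℝ,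
      (∀ δ : ↥D, ∑ γ : ↥C, c γ * σt (monomial ((γ : Fin n →₀ ℕ) + (δ : Fin n →₀ ℕ)) 1) = 0) →
      c = 0) :
    IsCompl (spanMon C) (LinearMap.ker (hankel σt)) := by
  classical
  set v : ↥C → MvPolynomial (Fin n) ℝ := fun γ => monomial (γ : Fin n →₀ ℕ) (1:ℝ) with hv
  have hspan : spanMon C = Submodule.span ℝ (Set.range v) := spanMon_eq C
  have hdisj : Disjoint (spanMon C) (LinearMap.ker (hankel σt)) := by
    rw [Submodule.disjoint_def]
    intro p hpC hpK
    rw [hspan] at hpC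
    obtain ⟨c, hc⟩ := Submodule.mem_span_range_iff_exists_fun ℝ |>.mp hpC
    have hc0 : c = 0 := by
      apply hind
      intro δ
      have h0 : σt (p * monomial (δ : Fin n →₀ ℕ) 1) = 0 :=
        (mem_ker_hankel σt p).mp hpK _
      rw [← hc] at h0
      rw [← h0, Finset.sum_mul, map_sum]
      refine Finset.sum_congr rfl fun γ _ => ?_
      simp [hv, smul_mul_assoc, MvPolynomial.monomial_mul, smul_eq_mul]
    rw [← hc, hc0]
    simp
  refine ⟨hdisj, ?_⟩
  rw [codisjoint_iff]
  have hrq : Module.rank ℝ (MvPolynomial (Fin n) ℝ ⧸ LinearMap.ker (hankel σt))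
      = (r : Cardinal) := by
    have h1 := LinearEquiv.rank_eq (R := ℝ)
      (M := MvPolynomial (Fin n) ℝ ⧸ LinearMap.ker (hankel σt))
      (M₁ := LinearMap.range (hankel σt)) ((hankel σt).quotKerEquivRange)
    exact h1.trans hrkt
  have hfin : Module.Finite ℝ (MvPolynomial (Fin n) ℝ ⧸ LinearMap.ker (hankel σt)) :=
    Module.finite_of_rank_eq_nat hrq
  have hfr : Module.finrank ℝ (MvPolynomial (Fin n) ℝ ⧸ LinearMap.ker (hankel σt)) = r :=
    Module.finrank_eq_of_rank_eq hrq
  have hvli : LinearIndependent ℝ v := by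
    have hveq : v = ⇑(MvPolynomial.basisMonomials (Fin n) ℝ) ∘ ((↑) : ↥C → (Fin n →₀ ℕ)) := by
      funext γ
      simp [hv, MvPolynomial.coe_basisMonomials]
    rw [hveq]
    exact (MvPolynomial.basisMonomials (Fin n) ℝ).linearIndependent.comp _ Subtype.coe_injective
  have hfrS : Module.finrank ℝ (spanMon C) = r := by
    rw [hspan, finrank_span_eq_card hvli, Fintype.card_coe, hcard]
  set K := LinearMap.ker (hankel σt) with hK
  let f := (K.mkQ).comp (spanMon C).subtype
  have hfinj : Function.Injective f := by
    rw [← LinearMap.ker_eq_bot, LinearMap.ker_comp, Submodule.ker_mkQ, Submodule.eq_bot_iff]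
    intro x hx
    simp only [Submodule.mem_comap, Submodule.subtype_apply] at hx
    exact Subtype.ext (Submodule.disjoint_def.mp hdisj x x.2 hx)
  have hrange : LinearMap.range f = Submodule.map K.mkQ (spanMon C) := by
    rw [LinearMap.range_comp, Submodule.range_subtype]
  have hfrmap : Module.finrank ℝ (Submodule.map K.mkQ (spanMon C)) = r := by
    rw [← hrange, LinearMap.finrank_range_of_inj hfinj, hfrS]
  have htop : Submodule.map K.mkQ (spanMon C) = ⊤ :=
    Submodule.eq_top_of_finrank_eq (by rw [hfrmap, hfr])
  have := (Submodule.map_mkQ_eq_top K (spanMon C)).mp htop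
  rwa [sup_comm] at this

theorem memKerOfVanish {n : ℕ} (C : Finset (Fin n →₀ ℕ))
    (σt : Module.Dual ℝ (MvPolynomial (Fin n) ℝ))
    (hc : IsCompl (spanMon C) (LinearMap.ker (hankel σt)))
    (p : MvPolynomial (Fin n) ℝ)
    (hp : ∀ γ ∈ C, σt (p * monomial γ 1) = 0) :
    p ∈ LinearMap.ker (hankel σt) := by
  rw [mem_ker_hankel]
  intro q
  have hq : q ∈ spanMon C ⊔ LinearMap.ker (hankel σt) := by
    rw [codisjoint_iff.mp hc.codisjoint]; trivial
  obtain ⟨b, hb, k, hk, rfl⟩ := Submodule.mem_sup.mp hq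
  rw [mul_add, map_add]
  have h1 : σt (p * b) = 0 := by
    have hle : spanMon C ≤ LinearMap.ker (hankel σt p) := by
      rw [spanMon, Submodule.span_le]
      rintro x ⟨γ, hγ, rfl⟩
      simp only [SetLike.mem_coe, LinearMap.mem_ker]
      rw [hankel_apply]
      exact hp γ hγ
    have := hle hb
    rwa [LinearMap.mem_ker, hankel_apply] at this
  have h2 : σt (p * k) = 0 := by
    rw [mul_comm, ← hankel_apply]
    rw [LinearMap.mem_ker] at hk
    rw [hk]; rfl
  rw [h1, h2, add_zero]

/-- under the flat extension condition
`rank H_σ^{B⁺,B'⁺} = rank H_σ^{B,B'} = |B| = |B'| = r`, for the flat extension `σ̃`: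
(1) `B` and `B'` are bases of `A_{σ̃} = R / ker H_{σ̃}`; (2) the matrix `M` determined by
`[H_σ^{xᵢB,B'}] = Mᵀ [H_σ^{B,B'}]` (i.e. `M = [H_σ^{B,B'}]⁻¹[H_σ^{xᵢB,B'}]` transposed
appropriately) is the matrix of multiplication by `xᵢ` in the basis `B`; (3) the matrix
`M'` determined by `[H_σ^{B,xᵢB'}] = [H_σ^{B,B'}] M'` is the matrix of multiplication by
`xᵢ` in the basis `B'`. -/
theorem stmt10 (n r : ℕ) (B B' : Finset (Fin n →₀ ℕ))
    (hB : connectedTo1 B) (hB' : connectedTo1 B')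
    (hcard : B.card = r) (hcard' : B'.card = r)
    (σ : Module.Dual ℝ (MvPolynomial (Fin n) ℝ))
    (hrk1 : (hMat σ (plusSet B) (plusSet B')).rank = r)
    (hrk2 : (hMat σ B B').rank = r)
    (σt : Module.Dual ℝ (MvPolynomial (Fin n) ℝ))
    (hext : ∀ α ∈ mulSet (plusSet B) (plusSet B'), σt (monomial α 1) = σ (monomial α 1))
    (hrkt : LinearMap.rank (hankel σt) = (r : Cardinal)) :
    IsCompl (spanMon B) (LinearMap.ker (hankel σt)) ∧
    IsCompl (spanMon B') (LinearMap.ker (hankel σt)) ∧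
    (∀ (i : Fin n) (M : Matrix ↥B ↥B ℝ),
      hMatX σ i B B' = Mᵀ * hMat σ B B' →
      ∀ β : ↥B, X i * monomial (β : Fin n →₀ ℕ) 1 -
          ∑ α : ↥B, M α β • monomial (α : Fin n →₀ ℕ) 1 ∈ LinearMap.ker (hankel σt)) ∧
    (∀ (i : Fin n) (M' : Matrix ↥B' ↥B' ℝ),
      hMatX σ i B B' = hMat σ B B' * M' →
      ∀ δ : ↥B', X i * monomial (δ : Fin n →₀ ℕ) 1 -
          ∑ γ : ↥B', M' γ δ • monomial (γ : Fin n →₀ ℕ) 1 ∈ LinearMap.ker (hankel σt)) := by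
  classical
  have hBp : ∀ {α : Fin n →₀ ℕ}, α ∈ B → α ∈ plusSet B :=
    fun h => Finset.mem_union_left _ h
  have hB'p : ∀ {α : Fin n →₀ ℕ}, α ∈ B' → α ∈ plusSet B' :=
    fun h => Finset.mem_union_left _ h
  have hXp : ∀ {α : Fin n →₀ ℕ} {C : Finset (Fin n →₀ ℕ)} (i : Fin n), α ∈ C →
      α + Finsupp.single i 1 ∈ plusSet C := by
    intro α C i h
    refine Finset.mem_union_right _ (Finset.mem_biUnion.mpr ⟨i, Finset.mem_univ i, ?_⟩)
    exact Finset.mem_image.mpr ⟨α, h, rfl⟩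
  have hmul : ∀ {μ ν : Fin n →₀ ℕ} {S T : Finset (Fin n →₀ ℕ)}, μ ∈ S → ν ∈ T →
      μ + ν ∈ mulSet S T := by
    intro μ ν S T hμ hν
    exact Finset.mem_image.mpr ⟨(μ, ν), Finset.mem_product.mpr ⟨hμ, hν⟩, rfl⟩
  have hσ : ∀ {μ ν : Fin n →₀ ℕ}, μ ∈ plusSet B → ν ∈ plusSet B' →
      σt (monomial (μ + ν) 1) = σ (monomial (μ + ν) 1) :=
    fun h1 h2 => hext _ (hmul h1 h2)
  -- rows of hMat σ B B' are linearly independent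
  have hrowli : LinearIndependent ℝ (fun α : ↥B => fun γ : ↥B' => hMat σ B B' α γ) := by
    rw [linearIndependent_iff_card_eq_finrank_span, Fintype.card_coe, hcard, Set.finrank]
    have := Matrix.rank_eq_finrank_span_row (hMat σ B B')
    rw [hrk2] at this
    exact this
  have hcolli : LinearIndependent ℝ (fun γ : ↥B' => fun α : ↥B => hMat σ B B' α γ) := by
    rw [linearIndependent_iff_card_eq_finrank_span, Fintype.card_coe, hcard', Set.finrank]
    have := Matrix.rank_eq_finrank_span_row (hMat σ B B')ᵀ
    rw [Matrix.rank_transpose, hrk2] at this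
    exact this
  have hindB : ∀ c : ↥B → ℝ,
      (∀ δ : ↥B', ∑ γ : ↥B, c γ * σt (monomial ((γ : Fin n →₀ ℕ) + (δ : Fin n →₀ ℕ)) 1) = 0) →
      c = 0 := by
    intro c hc
    have h0 : ∑ γ : ↥B, c γ • (fun δ : ↥B' => hMat σ B B' γ δ) = 0 := by
      funext δ
      simp only [Finset.sum_apply, Pi.smul_apply, smul_eq_mul, Pi.zero_apply]
      rw [← hc δ]
      refine Finset.sum_congr rfl fun γ _ => ?_
      rw [show hMat σ B B' γ δ = σ (monomial ((γ : Fin n →₀ ℕ) + (δ : Fin n →₀ ℕ)) 1) from rfl,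
        ← hσ (hBp γ.2) (hB'p δ.2)]
    have := Fintype.linearIndependent_iff.mp hrowli c h0
    funext γ; exact this γ
  have hindB' : ∀ c : ↥B' → ℝ,
      (∀ δ : ↥B, ∑ γ : ↥B', c γ * σt (monomial ((γ : Fin n →₀ ℕ) + (δ : Fin n →₀ ℕ)) 1) = 0) →
      c = 0 := by
    intro c hc
    have h0 : ∑ γ : ↥B', c γ • (fun α : ↥B => hMat σ B B' α γ) = 0 := by
      funext α
      simp only [Finset.sum_apply, Pi.smul_apply, smul_eq_mul, Pi.zero_apply]
      rw [← hc α]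
      refine Finset.sum_congr rfl fun γ _ => ?_
      rw [show hMat σ B B' α γ = σ (monomial ((α : Fin n →₀ ℕ) + (γ : Fin n →₀ ℕ)) 1) from rfl,
        ← hσ (hBp α.2) (hB'p γ.2), add_comm (α : Fin n →₀ ℕ) (γ : Fin n →₀ ℕ)]
    have := Fintype.linearIndependent_iff.mp hcolli c h0
    funext γ; exact this γ
  have hcB : IsCompl (spanMon B) (LinearMap.ker (hankel σt)) :=
    keyCompl (D := B') B hcard σt hrkt hindB
  have hcB' : IsCompl (spanMon B') (LinearMap.ker (hankel σt)) :=
    keyCompl (D := B) B' hcard' σt hrkt hindB'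
  refine ⟨hcB, hcB', ?_, ?_⟩
  · intro i M hM β
    apply memKerOfVanish B' σt hcB'
    intro γ hγ
    have h1 : hMatX σ i B B' β ⟨γ, hγ⟩ =
        ∑ α : ↥B, M α β * hMat σ B B' α ⟨γ, hγ⟩ := by
      rw [hM]
      simp [Matrix.mul_apply, Matrix.transpose_apply]
    have hXm : X i * monomial (β : Fin n →₀ ℕ) (1:ℝ) * monomial γ 1 =
        monomial (((β : Fin n →₀ ℕ) + Finsupp.single i 1) + γ) 1 := by
      rw [show ((β : Fin n →₀ ℕ) + Finsupp.single i 1) + γ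
          = Finsupp.single i 1 + ((β : Fin n →₀ ℕ) + γ) from by abel,
        monomial_single_add, pow_one, mul_assoc, monomial_mul, one_mul]
    rw [sub_mul, Finset.sum_mul, map_sub, map_sum, hXm]
    have h2 : σt (monomial (((β : Fin n →₀ ℕ) + Finsupp.single i 1) + γ) 1) =
        hMatX σ i B B' β ⟨γ, hγ⟩ := by
      rw [hσ (hXp i β.2) (hB'p hγ)]
      show σ _ = σ (X i * monomial ((β : Fin n →₀ ℕ) + γ) 1)
      rw [show X i * monomial ((β : Fin n →₀ ℕ) + γ) (1:ℝ)
          = monomial (Finsupp.single i 1 + ((β : Fin n →₀ ℕ) + γ)) 1 from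
            (monomial_single_add.trans (by rw [pow_one])).symm]
      congr 1
      abel
    rw [h2, h1]
    rw [sub_eq_zero]
    refine Finset.sum_congr rfl fun α _ => ?_
    rw [smul_mul_assoc, _root_.map_smul, smul_eq_mul, monomial_mul, one_mul, hσ (hBp α.2) (hB'p hγ)]
    rfl
  · intro i M' hM' δ
    apply memKerOfVanish B σt hcB
    intro α hα
    have h1 : hMatX σ i B B' ⟨α, hα⟩ δ =
        ∑ γ : ↥B', M' γ δ * hMat σ B B' ⟨α, hα⟩ γ := by
      rw [hM']
      simp [Matrix.mul_apply, mul_comm]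
    have hXm : X i * monomial (δ : Fin n →₀ ℕ) (1:ℝ) * monomial α 1 =
        monomial (α + ((δ : Fin n →₀ ℕ) + Finsupp.single i 1)) 1 := by
      rw [show α + ((δ : Fin n →₀ ℕ) + Finsupp.single i 1)
          = Finsupp.single i 1 + ((δ : Fin n →₀ ℕ) + α) from by abel,
        monomial_single_add, pow_one, mul_assoc, monomial_mul, one_mul]
    rw [sub_mul, Finset.sum_mul, map_sub, map_sum, hXm]
    have h2 : σt (monomial (α + ((δ : Fin n →₀ ℕ) + Finsupp.single i 1)) 1) =
        hMatX σ i B B' ⟨α, hα⟩ δ := by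
      rw [hσ (hBp hα) (hXp i δ.2)]
      show σ _ = σ (X i * monomial (α + (δ : Fin n →₀ ℕ)) 1)
      rw [show X i * monomial (α + (δ : Fin n →₀ ℕ)) (1:ℝ)
          = monomial (Finsupp.single i 1 + (α + (δ : Fin n →₀ ℕ))) 1 from
            (monomial_single_add.trans (by rw [pow_one])).symm]
      congr 1
      abel
    rw [h2, h1]
    rw [sub_eq_zero]
    refine Finset.sum_congr rfl fun γ _ => ?_
    rw [smul_mul_assoc, _root_.map_smul, smul_eq_mul, monomial_mul, one_mul,
      show (γ : Fin n →₀ ℕ) + α = α + (γ : Fin n →₀ ℕ) from add_comm _ _,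
      hσ (hBp hα) (hB'p γ.2)]
    rfl
end
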